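/- arXiv:2406.15745 — 2 statements merged into one kernel-verified Lean document; each statement's English description precedes it below -/
import Mathlib

section
/- Let R be a ring with proper involution, m a positive integer, and let x be an m-weak group inverse of a ∈ R. Then x has a weak group inverse, and a^2 x is a weak group inverse of x; that is, (a^{W_m})^{W} = a^2 a^{W_m}. -/
/-!
Only the identities `a * x ^ 2 = x` and `x * a ^ (k + 1) = a ^ k` matter. The first gives
`a ^ n * x ^ (n + 1) = x` for every `n`, and together with the second it yields
`x * a ^ 2 * x = a * x = a ^ 2 * x * x`. Hence `a ^ 2 * x` commutes with `x` and is in fact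
the group inverse of `x`, and a group inverse is always a weak group inverse.
-/

/-- `z` is an `m`-weak group inverse of `a`. -/
def IsMWGI {R : Type*} [Ring R] [StarRing R] (m : ℕ) (a z : R) : Prop :=
  a * z ^ 2 = z ∧ ∃ k : ℕ, z * a ^ (k + 1) = a ^ k ∧
    star (a ^ k) * a ^ (m + 1) * z = star (a ^ k) * a ^ m

/-- `w` is a weak group inverse of `b`. -/
def IsWGI {R : Type*} [Ring R] [StarRing R] (b w : R) : Prop :=
  b * w ^ 2 = w ∧ star (star b * b ^ 2 * w) = star b * b ^ 2 * w ∧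
    ∃ k : ℕ, b ^ k = w * b ^ (k + 1)

/-- `x` is a group inverse of `u`. -/
def IsGroupInv {R : Type*} [Ring R] (u x : R) : Prop :=
  u * x ^ 2 = x ∧ u * x = x * u ∧ u = u ^ 2 * x

/-- `d` is a Drazin inverse of `a`. -/
def IsDrazin {R : Type*} [Ring R] (a d : R) : Prop :=
  a * d ^ 2 = d ∧ a * d = d * a ∧ ∃ k : ℕ, a ^ k = d * a ^ (k + 1)

/-- `y` is a core-EP inverse of `a`. -/
def IsCoreEP {R : Type*} [Ring R] [StarRing R] (a y : R) : Prop :=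
  a * y ^ 2 = y ∧ star (a * y) = a * y ∧ ∃ k : ℕ, a ^ k = y * a ^ (k + 1)

theorem IsGroupInv.isWGI {R : Type*} [Ring R] [StarRing R] {b w : R} (h : IsGroupInv b w) :
    IsWGI b w := by
  obtain ⟨h_outer, h_comm, h_inner⟩ := h
  have h_sq : star b * b ^ 2 * w = star b * b := by rw [mul_assoc, ← h_inner]
  refine ⟨h_outer, ?_, 1, ?_⟩
  · rw [h_sq]
    exact IsSelfAdjoint.star_mul_self b
  · rw [pow_one, ← ((Commute.pow_left h_comm 2).eq), ← h_inner]

section Monoid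

variable {M : Type*} [Monoid M] {a x : M}

theorem mul_pow_add_two_of_mul_sq (h : a * x ^ 2 = x) (n : ℕ) : a * x ^ (n + 2) = x ^ (n + 1) := by
  rw [add_comm n 2, pow_add, ← mul_assoc, h, ← pow_succ', add_comm]

theorem pow_mul_pow_succ_of_mul_sq (h : a * x ^ 2 = x) (n : ℕ) : a ^ n * x ^ (n + 1) = x := by
  induction n with
  | zero => simp
  | succ n ih => rw [pow_succ, mul_assoc, mul_pow_add_two_of_mul_sq h, ih]

theorem mul_sq_mul_eq_of_mul_sq (h : a * x ^ 2 = x) {k : ℕ} (hk : x * a ^ (k + 1) = a ^ k) :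
    x * a ^ 2 * x = a * x := by
  have hk' : x * a ^ (k + 2) = a ^ (k + 1) := by rw [pow_succ a (k + 1), ← mul_assoc, hk, pow_succ]
  calc x * a ^ 2 * x = x * a ^ 2 * (a ^ k * x ^ (k + 1)) := by rw [pow_mul_pow_succ_of_mul_sq h]
    _ = x * a ^ (k + 2) * x ^ (k + 1) := by
      rw [← mul_assoc (x * a ^ 2), mul_assoc x, ← pow_add, add_comm 2 k]
    _ = a * (a ^ k * x ^ (k + 1)) := by rw [hk', pow_succ', mul_assoc]
    _ = a * x := by rw [pow_mul_pow_succ_of_mul_sq h]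

end Monoid

theorem IsMWGI.isGroupInv_sq_mul {R : Type*} [Ring R] [StarRing R] {m : ℕ} {a x : R}
    (hx : IsMWGI m a x) : IsGroupInv x (a ^ 2 * x) := by
  obtain ⟨h_outer, k, hk, -⟩ := hx
  have h_key := mul_sq_mul_eq_of_mul_sq h_outer hk
  have h_right : a ^ 2 * x * x = a * x := by
    rw [pow_two, mul_assoc, mul_assoc, ← pow_two, h_outer]
  refine ⟨?_, ?_, ?_⟩
  · calc x * (a ^ 2 * x) ^ 2 = x * a ^ 2 * x * (a ^ 2 * x) := by noncomm_ring
      _ = a * x * (a ^ 2 * x) := by rw [h_key]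
      _ = a * (x * a ^ 2 * x) := by noncomm_ring
      _ = a ^ 2 * x := by rw [h_key, ← mul_assoc, ← pow_two]
  · rw [← mul_assoc, h_key, h_right]
  · calc x = a * x ^ 2 := h_outer.symm
      _ = x * a ^ 2 * x * x := by rw [h_key, mul_assoc, ← pow_two]
      _ = x * (a ^ 2 * x * x) := by noncomm_ring
      _ = x * (x * a ^ 2 * x) := by rw [h_right, h_key]
      _ = x ^ 2 * (a ^ 2 * x) := by noncomm_ring

theorem mwgi_has_wgi_general {R : Type*} [Ring R] [StarRing R]
    (m : ℕ) (a x : R) (hx : IsMWGI m a x) :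
    IsWGI x (a ^ 2 * x) :=
  hx.isGroupInv_sq_mul.isWGI

theorem mwgi_has_wgi {R : Type*} [Ring R] [StarRing R]
    (hproper : ∀ x : R, star x * x = 0 → x = 0)
    (m : ℕ) (hm : 0 < m) (a x : R) (hx : IsMWGI m a x) :
    IsWGI x (a ^ 2 * x) :=
  mwgi_has_wgi_general m a x hx
end

section
/- Let R be a ring with proper involution. An element a ∈ R has a weak group inverse if and only if a has a Drazin inverse d and there exists an idempotent p ∈ R (p^2 = p) such that a + p is right invertible, d^* a p = 0, and d R = (1 - p) R (i.e. d = (1 - p) u and 1 - p = d v for some u, v ∈ R). In this case, d (1 - p) is a weak group inverse of a. -/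
section PowerIdentities

variable {M : Type*} [Monoid M] {a w : M}

theorem mul_pow_add_two_of_mul_sq_eq (h : a * w ^ 2 = w) (j : ℕ) :
    a * w ^ (j + 2) = w ^ (j + 1) := by
  rw [add_comm j 2, pow_add, ← mul_assoc, h, ← pow_succ']

theorem pow_mul_pow_succ_of_mul_sq_eq (h : a * w ^ 2 = w) (j : ℕ) : a ^ j * w ^ (j + 1) = w := by
  induction j with
  | zero => simp
  | succ j ih => rw [pow_succ, mul_assoc, mul_pow_add_two_of_mul_sq_eq h, ih]

theorem pow_succ_mul_pow_succ_of_mul_sq_eq (h : a * w ^ 2 = w) (j : ℕ) :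
    a ^ (j + 1) * w ^ (j + 1) = a * w := by
  rw [pow_succ', mul_assoc, pow_mul_pow_succ_of_mul_sq_eq h]

theorem mul_mul_mul_eq_of_mul_sq_eq (h : a * w ^ 2 = w) (x : M) : a * w * (w * x) = w * x := by
  rw [mul_assoc, ← mul_assoc w, ← sq, ← mul_assoc, h]

variable {k : ℕ}

theorem pow_add_eq_mul_pow_add_succ (h : a ^ k = w * a ^ (k + 1)) (j : ℕ) :
    a ^ (k + j) = w * a ^ (k + j + 1) := by
  induction j with
  | zero => exact h
  | succ j ih => rw [← add_assoc, pow_succ, ih, mul_assoc, ← pow_succ]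

theorem pow_mul_pow_add_eq (h : a ^ k = w * a ^ (k + 1)) (j : ℕ) : w ^ j * a ^ (k + j) = a ^ k := by
  induction j with
  | zero => simp
  | succ j ih => rw [← add_assoc, pow_succ, mul_assoc, ← pow_add_eq_mul_pow_add_succ h, ih]

theorem pow_add_two_mul_pow_succ_mul_pow_add_two (hk : a ^ k = w * a ^ (k + 1)) :
    w ^ (k + 2) * a ^ (k + 1) * a ^ (k + 2) = a ^ (k + 1) := by
  rw [mul_assoc, ← pow_add, ← add_assoc]
  exact pow_mul_pow_add_eq (pow_add_eq_mul_pow_add_succ hk 1) (k + 2)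

theorem isIdempotentElem_mul_of_mul_sq_eq (hw : a * w ^ 2 = w) (hk : a ^ k = w * a ^ (k + 1)) :
    IsIdempotentElem (a * w) := by
  rw [IsIdempotentElem]
  nth_rw 2 [← pow_succ_mul_pow_succ_of_mul_sq_eq hw k]
  rw [mul_assoc, ← mul_assoc w, ← hk, ← mul_assoc, ← pow_succ',
    pow_succ_mul_pow_succ_of_mul_sq_eq hw]

end PowerIdentities

namespace IsDrazin

variable {R : Type*} [Ring R] {a d : R}

theorem isIdempotentElem_mul (hd : IsDrazin a d) : IsIdempotentElem (a * d) := by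
  obtain ⟨had2, hcomm, -⟩ := hd
  rw [IsIdempotentElem, mul_assoc, ← mul_assoc d, ← hcomm, mul_assoc, ← sq, had2]

theorem commute (hd : IsDrazin a d) : Commute a d := hd.2.1

theorem commute_one_sub_mul (hd : IsDrazin a d) : Commute a (1 - a * d) :=
  (Commute.one_right a).sub_right ((Commute.refl a).mul_right hd.commute)

theorem pow_mul_one_sub_eq_zero (hd : IsDrazin a d) : ∃ k : ℕ, a ^ k * (1 - a * d) = 0 := by
  obtain ⟨k, hk⟩ := hd.2.2
  refine ⟨k, ?_⟩
  rw [mul_sub, mul_one, ← mul_assoc, ← pow_succ, (hd.commute.pow_left (k + 1)).eq, ← hk, sub_self]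

theorem isNilpotent_mul_one_sub (hd : IsDrazin a d) : IsNilpotent (a * (1 - a * d)) := by
  obtain ⟨k, hk⟩ := hd.pow_mul_one_sub_eq_zero
  refine ⟨k + 1, ?_⟩
  rw [hd.commute_one_sub_mul.mul_pow, hd.isIdempotentElem_mul.one_sub.pow_succ_eq, pow_succ',
    mul_assoc, hk, mul_zero]

theorem exists_one_add_mul_eq (hd : IsDrazin a d) : ∃ x : R, (1 + a) * x = 1 - a * d := by
  obtain ⟨u, hu⟩ := hd.isNilpotent_mul_one_sub.isUnit_one_add
  have hfactor : (1 + a) * (1 - a * d) = (1 - a * d) * ↑u := by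
    rw [hu, mul_add, mul_one, ← mul_assoc, ← hd.commute_one_sub_mul.eq, mul_assoc,
      hd.isIdempotentElem_mul.one_sub.eq, add_mul, one_mul]
  exact ⟨(1 - a * d) * ↑u⁻¹, by rw [← mul_assoc, hfactor, mul_assoc, Units.mul_inv, mul_one]⟩

theorem mul_mul_eq_self_of_eq_mul (hd : IsDrazin a d) {x v : R} (hx : x = d * v) :
    a * (d * x) = x := by
  rw [hx, ← mul_assoc d, ← sq, ← mul_assoc, hd.1]

theorem exists_add_mul_eq_one (hd : IsDrazin a d) {p v : R} (hpd : p * d = 0)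
    (hv : 1 - p = d * v) : ∃ s : R, (a + p) * s = 1 := by
  obtain ⟨x, hx⟩ := hd.exists_one_add_mul_eq
  have hshift : (a + p) * (1 + d * (1 - p)) = 1 + a := by
    rw [mul_add, mul_one, add_mul, hd.mul_mul_eq_self_of_eq_mul hv, ← mul_assoc, hpd, zero_mul]
    abel
  refine ⟨d + (1 + d * (1 - p)) * x, ?_⟩
  rw [mul_add, ← mul_assoc, hshift, hx, add_mul, hpd, add_zero, add_sub_cancel]

theorem isWGI_mul_one_sub [StarRing R] (hd : IsDrazin a d) {p v : R} (hpd : p * d = 0)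
    (hdap : star d * a * p = 0) (hv : 1 - p = d * v) : IsWGI a (d * (1 - p)) := by
  have haw : a * (d * (1 - p)) = 1 - p := hd.mul_mul_eq_self_of_eq_mul hv
  have hpa : star p * (star a * (a * (1 - p))) = 0 := by
    have hstar : star p * (star a * d) = 0 := by
      simpa only [star_mul, star_star, star_zero] using congrArg star hdap
    have hfactor : a * (1 - p) = d * (a * v) := by rw [hv, ← mul_assoc, hd.commute.eq, mul_assoc]
    rw [hfactor, ← mul_assoc (star a), ← mul_assoc, hstar, zero_mul]
  obtain ⟨k, hk⟩ := hd.2.2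
  have hpak : p * a ^ (k + 1) = 0 := by
    rw [pow_succ, ← mul_assoc, hk, ← mul_assoc, hpd, zero_mul, zero_mul]
  refine ⟨?_, ?_, k, ?_⟩
  · rw [sq, mul_assoc d, ← mul_assoc (1 - p), sub_mul, one_mul, hpd, sub_zero]
    exact hd.mul_mul_eq_self_of_eq_mul rfl
  · have hsq : star a * a ^ 2 * (d * (1 - p)) = star (a * (1 - p)) * (a * (1 - p)) := by
      rw [sq, mul_assoc, mul_assoc, haw, star_mul, star_sub, star_one, sub_mul, sub_mul, one_mul,
        mul_assoc, hpa, sub_zero]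
    rw [hsq, star_mul, star_star]
  · rw [mul_assoc, sub_mul, one_mul, hpak, sub_zero, hk]

end IsDrazin

section WeakGroupInverse

variable {R : Type*} [Ring R] {a w : R} {k : ℕ}

theorem isDrazin_pow_mul_pow_of_mul_sq_eq (hw : a * w ^ 2 = w) (hk : a ^ k = w * a ^ (k + 1)) :
    IsDrazin a (w ^ (k + 2) * a ^ (k + 1)) := by
  have hk1 : a ^ (k + 1) = w * a ^ (k + 1 + 1) := pow_add_eq_mul_pow_add_succ hk 1
  have had : a * (w ^ (k + 2) * a ^ (k + 1)) = w ^ (k + 1) * a ^ (k + 1) := by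
    rw [← mul_assoc, mul_pow_add_two_of_mul_sq_eq hw]
  have hda : w ^ (k + 2) * a ^ (k + 1) * a = w ^ (k + 1) * a ^ (k + 1) := by
    rw [mul_assoc, ← pow_succ, pow_succ w, mul_assoc, ← hk1]
  refine ⟨?_, had.trans hda.symm, k + 1, ?_⟩
  · rw [sq, ← mul_assoc, had, mul_assoc, ← mul_assoc (a ^ (k + 1)),
      pow_mul_pow_succ_of_mul_sq_eq hw (k + 1), ← mul_assoc, ← pow_succ]
  · exact (pow_add_two_mul_pow_succ_mul_pow_add_two hk).symm

theorem IsWGI.star_mul_mul_one_sub_eq_zero [StarRing R] (h : IsWGI a w) :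
    star w * (a * (1 - a * w)) = 0 := by
  obtain ⟨hw, hself, k, hk⟩ := h
  have hright : star a * a ^ 2 * w * a ^ (k + 1) = star a * a ^ (k + 2) := by
    rw [mul_assoc, ← hk, mul_assoc, ← pow_add, add_comm]
  have hann : star (a ^ (k + 2)) * (a * (1 - a * w)) = 0 := by
    have hstar := congrArg star hright
    rw [star_mul, hself, star_mul, star_star] at hstar
    rw [mul_sub, mul_one, mul_sub, sub_eq_zero, ← hstar, show a ^ (k + 2) = a * a ^ (k + 1) from
      pow_succ' a (k + 1), star_mul, sq]
    simp only [mul_assoc]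
  nth_rw 1 [← pow_mul_pow_succ_of_mul_sq_eq hw (k + 2)]
  rw [star_mul, mul_assoc, hann, mul_zero]

theorem IsWGI.exists_isDrazin_polar_like [StarRing R] (h : IsWGI a w) :
    ∃ d : R, IsDrazin a d ∧ ∃ p : R, p ^ 2 = p ∧
      (∃ s : R, (a + p) * s = 1) ∧
      star d * a * p = 0 ∧
      (∃ u : R, d = (1 - p) * u) ∧ (∃ v : R, 1 - p = d * v) := by
  have hstar := h.star_mul_mul_one_sub_eq_zero
  obtain ⟨hw, -, k, hk⟩ := h
  set d := w ^ (k + 2) * a ^ (k + 1) with hd_def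
  have hd : IsDrazin a d := isDrazin_pow_mul_pow_of_mul_sq_eq hw hk
  have hed : a * w * d = d := by
    rw [hd_def, pow_succ', mul_assoc w]
    exact mul_mul_mul_eq_of_mul_sq_eq hw _
  have hdv : 1 - (1 - a * w) = d * (a ^ (k + 2) * w ^ (k + 1)) := by
    rw [sub_sub_cancel, ← mul_assoc, pow_add_two_mul_pow_succ_mul_pow_add_two hk,
      pow_succ_mul_pow_succ_of_mul_sq_eq hw]
  have hdap : star d * a * (1 - a * w) = 0 := by
    rw [hd_def, star_mul, show w ^ (k + 2) = w * w ^ (k + 1) from pow_succ' w (k + 1), star_mul]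
    simp only [mul_assoc, hstar, mul_zero]
  refine ⟨d, hd, 1 - a * w, ?_, hd.exists_add_mul_eq_one ?_ hdv, hdap,
    ⟨d, by rw [sub_sub_cancel, hed]⟩, ⟨_, hdv⟩⟩
  · rw [sq]
    exact (isIdempotentElem_mul_of_mul_sq_eq hw hk).one_sub
  · rw [sub_mul, one_mul, hed, sub_self]

end WeakGroupInverse

theorem wgi_iff_polar_like_general {R : Type*} [Ring R] [StarRing R]
    (a : R) :
    ((∃ w : R, IsWGI a w) ↔
      ∃ d : R, IsDrazin a d ∧ ∃ p : R, p ^ 2 = p ∧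
        (∃ s : R, (a + p) * s = 1) ∧
        star d * a * p = 0 ∧
        (∃ u : R, d = (1 - p) * u) ∧ (∃ v : R, 1 - p = d * v)) ∧
      ∀ d p : R, IsDrazin a d → p ^ 2 = p →
        (∃ s : R, (a + p) * s = 1) →
        star d * a * p = 0 →
        (∃ u : R, d = (1 - p) * u) → (∃ v : R, 1 - p = d * v) →
        IsWGI a (d * (1 - p)) := by
  have hpd : ∀ {d p u : R}, p ^ 2 = p → d = (1 - p) * u → p * d = 0 := fun hp hu => by
    rw [hu, ← mul_assoc, IsIdempotentElem.mul_one_sub_self (by rwa [IsIdempotentElem, ← sq]),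
      zero_mul]
  refine ⟨⟨fun ⟨w, hw⟩ => hw.exists_isDrazin_polar_like, ?_⟩, ?_⟩
  · rintro ⟨d, hd, p, hp, -, hdap, ⟨u, hu⟩, ⟨v, hv⟩⟩
    exact ⟨_, hd.isWGI_mul_one_sub (hpd hp hu) hdap hv⟩
  · rintro d p hd hp - hdap ⟨u, hu⟩ ⟨v, hv⟩
    exact hd.isWGI_mul_one_sub (hpd hp hu) hdap hv

theorem wgi_iff_polar_like {R : Type*} [Ring R] [StarRing R]
    (hproper : ∀ x : R, star x * x = 0 → x = 0)
    (a : R) :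
    ((∃ w : R, IsWGI a w) ↔
      ∃ d : R, IsDrazin a d ∧ ∃ p : R, p ^ 2 = p ∧
        (∃ s : R, (a + p) * s = 1) ∧
        star d * a * p = 0 ∧
        (∃ u : R, d = (1 - p) * u) ∧ (∃ v : R, 1 - p = d * v)) ∧
      ∀ d p : R, IsDrazin a d → p ^ 2 = p →
        (∃ s : R, (a + p) * s = 1) →
        star d * a * p = 0 →
        (∃ u : R, d = (1 - p) * u) → (∃ v : R, 1 - p = d * v) →
        IsWGI a (d * (1 - p)) :=
  wgi_iff_polar_like_general a
end
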